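/- For every integer b ≥ 0, the minimum order of a weighted graph G = (L,H) with L 2-regular, H b-regular, disjoint edge sets, and girth 5 (minimum cycle weight 5 with L-edges weight 1 and H-edges weight 2) is exactly b + 5. -/

import Mathlib

open Classical in
/-- Weight of a walk in `L ⊔ H`: light edges (in `L`) weigh 1, heavy edges weigh 2. -/
noncomputable def wWeight {V : Type*} (L H : SimpleGraph V) {u : V}
    (w : (L ⊔ H).Walk u u) : ℕ :=
  (w.edges.map fun e => if e ∈ L.edgeSet then 1 else 2).sum

/-- `(L,H)` is an `(a,b)`-regular weighted graph of girth `g`. -/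
def IsWGraph {V : Type*} (L H : SimpleGraph V) (a b g : ℕ) : Prop :=
  Disjoint L H ∧
  (∀ v, (L.neighborSet v).ncard = a) ∧
  (∀ v, (H.neighborSet v).ncard = b) ∧
  (∃ (u : V) (w : (L ⊔ H).Walk u u), w.IsCycle ∧ wWeight L H w = g) ∧
  (∀ (u : V) (w : (L ⊔ H).Walk u u), w.IsCycle → g ≤ wWeight L H w)


/-!
A cycle of weight at most 4 is either a triangle with two light edges or a light 4-cycle, so
girth at least 5 says exactly that no edge joins the two distinct ends of a light path of length 2
and that `L` has no 4-cycle. Hence for every vertex `v`, the vertex `v`, its two light neighbours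
and their two further light neighbours are five distinct vertices, none of them a heavy neighbour
of `v`; with the `b` heavy neighbours of `v` this gives `b + 5` vertices.

Conversely, on `ZMod n` with `n ≥ 5` let `L` be the `n`-cycle and let `H` join two residues whose
difference is not one of `-2, …, 2`. Then `H` is `(n - 5)`-regular, and a cycle of weight 5 is the
`n`-cycle itself when `n = 5`, and `0, 1, 2, 3` closed by the heavy edge from `3` to `0` when
`n ≥ 6`.
-/

open SimpleGraph

namespace SimpleGraph.Walk

variable {V : Type*} {G : SimpleGraph V}

theorem isCycle_triangle {a b c : V} (hab : G.Adj a b) (hbc : G.Adj b c) (hca : G.Adj c a) :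
    (cons hab (cons hbc (cons hca nil))).IsCycle := by
  simp [cons_isCycle_iff, hab.ne, hbc.ne, hca.ne, hca.ne.symm, hab.ne.symm]

theorem isCycle_square {a b c d : V} (hab : G.Adj a b) (hbc : G.Adj b c) (hcd : G.Adj c d)
    (hda : G.Adj d a) (hac : a ≠ c) (hbd : b ≠ d) :
    (cons hab (cons hbc (cons hcd (cons hda nil)))).IsCycle := by
  simp [cons_isCycle_iff, hab.ne, hbc.ne, hcd.ne, hda.ne, hac, hbd, hac.symm, hab.ne.symm,
    hda.ne.symm]

theorem isCycle_pentagon {a b c d e : V} (hab : G.Adj a b) (hbc : G.Adj b c) (hcd : G.Adj c d)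
    (hde : G.Adj d e) (hea : G.Adj e a) (hac : a ≠ c) (had : a ≠ d) (hbd : b ≠ d) (hbe : b ≠ e)
    (hce : c ≠ e) :
    (cons hab (cons hbc (cons hcd (cons hde (cons hea nil))))).IsCycle := by
  simp [cons_isCycle_iff, hab.ne, hbc.ne, hcd.ne, hde.ne, hea.ne, hac, had, hbd, hbe, hce,
    hac.symm, had.symm, hab.ne.symm, hea.ne.symm]

end SimpleGraph.Walk

section WeightedGirth

variable {V : Type*} {L H : SimpleGraph V}

theorem length_le_wWeight {u : V} (w : (L ⊔ H).Walk u u) : w.length ≤ wWeight L H w := by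
  rw [wWeight, ← w.length_edges, ← w.edges.length_map]
  refine List.length_le_sum_of_one_le _ ?_
  simp only [List.mem_map]
  rintro _ ⟨e, -, rfl⟩
  split <;> omega

theorem five_le_wWeight_triangle
    (hpath : ∀ a b c, L.Adj a b → L.Adj b c → a ≠ c → ¬(L ⊔ H).Adj c a)
    {a b c : V} (hab : (L ⊔ H).Adj a b) (hbc : (L ⊔ H).Adj b c) (hca : (L ⊔ H).Adj c a) :
    5 ≤ wWeight L H (.cons hab (.cons hbc (.cons hca .nil))) := by
  have h₁ : ¬(L.Adj a b ∧ L.Adj b c) := fun ⟨l₁, l₂⟩ => hpath a b c l₁ l₂ hca.ne.symm hca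
  have h₂ : ¬(L.Adj b c ∧ L.Adj c a) := fun ⟨l₂, l₃⟩ => hpath b c a l₂ l₃ hab.ne.symm hab
  have h₃ : ¬(L.Adj c a ∧ L.Adj a b) := fun ⟨l₃, l₁⟩ => hpath c a b l₃ l₁ hbc.ne.symm hbc
  simp only [wWeight, Walk.edges_cons, Walk.edges_nil, List.map_cons, List.map_nil,
    List.sum_cons, List.sum_nil, mem_edgeSet]
  split_ifs <;> simp_all

theorem five_le_wWeight_square
    (hsq : ∀ a b c d, L.Adj a b → L.Adj b c → L.Adj c d → L.Adj d a → a ≠ c → b ≠ d → False)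
    {a b c d : V} (hab : (L ⊔ H).Adj a b) (hbc : (L ⊔ H).Adj b c) (hcd : (L ⊔ H).Adj c d)
    (hda : (L ⊔ H).Adj d a) (hac : a ≠ c) (hbd : b ≠ d) :
    5 ≤ wWeight L H (.cons hab (.cons hbc (.cons hcd (.cons hda .nil)))) := by
  simp only [wWeight, Walk.edges_cons, Walk.edges_nil, List.map_cons, List.map_nil,
    List.sum_cons, List.sum_nil, mem_edgeSet]
  split_ifs with l₁ l₂ l₃ l₄ <;> first | omega | exact (hsq a b c d l₁ l₂ l₃ l₄ hac hbd).elim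

theorem forall_five_le_wWeight_iff :
    (∀ (u : V) (w : (L ⊔ H).Walk u u), w.IsCycle → 5 ≤ wWeight L H w) ↔
      (∀ a b c, L.Adj a b → L.Adj b c → a ≠ c → ¬(L ⊔ H).Adj c a) ∧
      (∀ a b c d, L.Adj a b → L.Adj b c → L.Adj c d → L.Adj d a → a ≠ c → b ≠ d → False) := by
  refine ⟨fun h => ⟨?_, ?_⟩, fun ⟨hpath, hsq⟩ u w hw => ?_⟩
  · intro a b c hab hbc hac hca
    have := h a _ (Walk.isCycle_triangle (Or.inl hab) (Or.inl hbc) hca)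
    simp only [wWeight, Walk.edges_cons, Walk.edges_nil, List.map_cons, List.map_nil,
      List.sum_cons, List.sum_nil, mem_edgeSet, hab, hbc, if_true] at this
    split_ifs at this <;> omega
  · intro a b c d hab hbc hcd hda hac hbd
    have := h a _ (Walk.isCycle_square (Or.inl hab) (Or.inl hbc) (Or.inl hcd) (Or.inl hda) hac hbd)
    simp [wWeight, hab, hbc, hcd, hda] at this
  · have hlen := length_le_wWeight w
    have hnodup := hw.support_nodup
    rcases w with _ | ⟨h₁, _ | ⟨h₂, _ | ⟨h₃, _ | ⟨h₄, _ | ⟨h₅, p⟩⟩⟩⟩⟩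
    · exact absurd hw.three_le_length (by simp)
    · exact absurd hw.three_le_length (by simp)
    · exact absurd hw.three_le_length (by simp)
    · exact five_le_wWeight_triangle hpath _ _ _
    · simp only [Walk.support_cons, Walk.support_nil, List.tail_cons, List.nodup_cons,
        List.mem_cons, List.not_mem_nil, or_false, not_or] at hnodup
      exact five_le_wWeight_square hsq _ _ _ _ (by tauto) (by tauto)
    · simp only [Walk.length_cons] at hlen
      omega

theorem exists_card_five_disjoint_neighborSet [DecidableEq V] (hLH : Disjoint L H)
    (hL : ∀ v, (L.neighborSet v).ncard = 2)
    (hpath : ∀ a b c, L.Adj a b → L.Adj b c → a ≠ c → ¬(L ⊔ H).Adj c a)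
    (hsq : ∀ a b c d, L.Adj a b → L.Adj b c → L.Adj c d → L.Adj d a → a ≠ c → b ≠ d → False)
    (v : V) : ∃ S : Finset V, S.card = 5 ∧ Disjoint (H.neighborSet v) S := by
  obtain ⟨u₁, u₂, hu, hNv⟩ := Set.ncard_eq_two.mp (hL v)
  have hvu₁ : L.Adj v u₁ := by simp [← mem_neighborSet, hNv]
  have hvu₂ : L.Adj v u₂ := by simp [← mem_neighborSet, hNv]
  obtain ⟨w₁, hu₁w₁ : L.Adj u₁ w₁, hw₁⟩ :=
    Set.exists_ne_of_one_lt_ncard (s := L.neighborSet u₁) (by rw [hL]; norm_num) v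
  obtain ⟨w₂, hu₂w₂ : L.Adj u₂ w₂, hw₂⟩ :=
    Set.exists_ne_of_one_lt_ncard (s := L.neighborSet u₂) (by rw [hL]; norm_num) v
  have hw₁u₂ : w₁ ≠ u₂ := by
    rintro rfl
    exact hpath v u₁ w₁ hvu₁ hu₁w₁ hvu₂.ne (Or.inl hvu₂.symm)
  have hw₂u₁ : w₂ ≠ u₁ := by
    rintro rfl
    exact hpath v u₂ w₂ hvu₂ hu₂w₂ hvu₁.ne (Or.inl hvu₁.symm)
  have hw₁w₂ : w₁ ≠ w₂ := by
    rintro rfl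
    exact hsq v u₁ w₁ u₂ hvu₁ hu₁w₁ hu₂w₂.symm hvu₂.symm hw₁.symm hu
  refine ⟨[v, u₁, u₂, w₁, w₂].toFinset, List.toFinset_card_of_nodup ?_, ?_⟩
  · simp [hvu₁.ne, hvu₂.ne, hu, hw₁.symm, hw₂.symm, hu₁w₁.ne, hu₂w₂.ne, hw₁u₂.symm, hw₂u₁.symm,
      hw₁w₂]
  refine Set.disjoint_right.mpr ?_
  simp only [List.coe_toFinset, List.mem_cons, List.not_mem_nil, or_false, mem_neighborSet]
  rintro x (rfl | rfl | rfl | rfl | rfl)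
  · exact H.irrefl
  · exact disjoint_left.mp hLH _ _ hvu₁
  · exact disjoint_left.mp hLH _ _ hvu₂
  · exact fun h => hpath v u₁ x hvu₁ hu₁w₁ hw₁.symm (Or.inr h.symm)
  · exact fun h => hpath v u₂ x hvu₂ hu₂w₂ hw₂.symm (Or.inr h.symm)

theorem IsWGraph.add_five_le_card [Finite V] {b : ℕ} (h : IsWGraph L H 2 b 5) :
    b + 5 ≤ Nat.card V := by
  classical
  obtain ⟨hLH, hL, hH, ⟨v, -⟩, hgirth⟩ := h
  obtain ⟨hpath, hsq⟩ := forall_five_le_wWeight_iff.mp hgirth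
  obtain ⟨S, hS, hSH⟩ := exists_card_five_disjoint_neighborSet hLH hL hpath hsq v
  calc b + 5 = (H.neighborSet v ∪ S).ncard := by
        rw [Set.ncard_union_eq hSH, hH, Set.ncard_coe_finset, hS]
    _ ≤ Nat.card V := Set.ncard_le_card _

end WeightedGirth

namespace SimpleGraph

section Circulant

variable {G : Type*} [AddGroup G]

theorem circulantGraph_singleton_adj {s : G} (hs : s ≠ 0) {v w : G} :
    (circulantGraph {s}).Adj v w ↔ w - v = s ∨ w - v = -s := by
  rw [circulantGraph_adj, Set.mem_singleton_iff, Set.mem_singleton_iff, ← neg_sub w v,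
    neg_eq_iff_eq_neg, or_comm]
  refine ⟨And.right, fun h => ⟨fun hvw => ?_, h⟩⟩
  subst hvw
  rcases h with h | h <;> simp_all [eq_comm]

theorem circulantGraph_compl_adj {D : Set G} (h0 : 0 ∈ D) (hneg : ∀ x ∈ D, -x ∈ D) {v w : G} :
    (circulantGraph Dᶜ).Adj v w ↔ w - v ∉ D := by
  rw [circulantGraph_adj, Set.mem_compl_iff, Set.mem_compl_iff]
  refine ⟨fun ⟨_, h⟩ hD => ?_, fun h => ⟨fun hvw => h (by simpa [hvw]), .inr h⟩⟩
  exact h.elim (· (by simpa using hneg _ hD)) (· hD)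

end Circulant

section CycleGraph

variable {R : Type*} [CommRing R]

theorem ncard_neighborSet_circulantGraph_one (h2 : (2 : R) ≠ 0) (v : R) :
    ((circulantGraph {1}).neighborSet v).ncard = 2 := by
  have h1 : (1 : R) ≠ 0 := fun h => h2 (by linear_combination 2 * h)
  have hN : (circulantGraph {1}).neighborSet v = {v + 1, v - 1} := by
    ext w
    rw [mem_neighborSet, circulantGraph_singleton_adj h1, sub_eq_iff_eq_add', sub_eq_iff_eq_add',
      ← sub_eq_add_neg]
    rfl
  rw [hN, Set.ncard_pair]
  exact fun h => h2 (by linear_combination h)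

theorem circulantGraph_one_sub_eq_two_or_neg_two (h1 : (1 : R) ≠ 0) {a b c : R}
    (hab : (circulantGraph {1}).Adj a b) (hbc : (circulantGraph {1}).Adj b c) (hac : a ≠ c) :
    c - a = 2 ∨ c - a = -2 := by
  rw [circulantGraph_singleton_adj h1] at hab hbc
  rcases hab with hab | hab <;> rcases hbc with hbc | hbc
  · left; linear_combination hab + hbc
  · exact absurd (by linear_combination -hab - hbc) hac
  · exact absurd (by linear_combination -hab - hbc) hac
  · right; linear_combination hab + hbc

theorem circulantGraph_one_not_adj_of_adj_adj (h3 : (3 : R) ≠ 0) {a b c : R}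
    (hab : (circulantGraph {1}).Adj a b) (hbc : (circulantGraph {1}).Adj b c) (hac : a ≠ c) :
    ¬(circulantGraph {1}).Adj c a := by
  have h1 : (1 : R) ≠ 0 := fun h => h3 (by linear_combination 3 * h)
  rw [circulantGraph_singleton_adj h1]
  rcases circulantGraph_one_sub_eq_two_or_neg_two h1 hab hbc hac with h | h <;> grind

theorem circulantGraph_one_not_square (h4 : (4 : R) ≠ 0) {a b c d : R}
    (hab : (circulantGraph {1}).Adj a b) (hbc : (circulantGraph {1}).Adj b c)
    (hcd : (circulantGraph {1}).Adj c d) (hda : (circulantGraph {1}).Adj d a)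
    (hac : a ≠ c) (hbd : b ≠ d) : False := by
  have h1 : (1 : R) ≠ 0 := fun h => h4 (by linear_combination 4 * h)
  rw [circulantGraph_singleton_adj h1] at hab hbc hcd hda
  rcases hab with hab | hab <;> rcases hbc with hbc | hbc <;> rcases hcd with hcd | hcd <;>
    rcases hda with hda | hda <;> grind

end CycleGraph

end SimpleGraph

namespace ZMod

variable {n : ℕ}

theorem ofNat_ne_zero_of_lt (k : ℕ) [k.AtLeastTwo] (hk : k < n) :
    (OfNat.ofNat k : ZMod n) ≠ 0 := by
  rw [Ne, ← Nat.cast_ofNat, natCast_eq_zero_iff]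
  exact fun hdvd => NeZero.ne k (Nat.eq_zero_of_dvd_of_lt hdvd hk)

theorem intCast_injOn_Icc {a b : ℤ} (h : b - a < n) :
    Set.InjOn ((↑) : ℤ → ZMod n) (Set.Icc a b) := by
  intro i hi j hj hij
  rw [intCast_eq_intCast_iff_dvd_sub] at hij
  simp only [Set.mem_Icc] at hi hj
  have := Int.eq_zero_of_abs_lt_dvd hij (abs_lt.mpr ⟨by omega, by omega⟩)
  omega

end ZMod

def nearZero (n : ℕ) : Set (ZMod n) := (↑) '' Set.Icc (-2 : ℤ) 2

section Construction

variable {n : ℕ}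

theorem ncard_nearZero (hn : 5 ≤ n) : (nearZero n).ncard = 5 := by
  rw [nearZero, (ZMod.intCast_injOn_Icc (by omega)).ncard_image, ← Finset.coe_Icc,
    Set.ncard_coe_finset]
  rfl

theorem circulantGraph_nearZero_compl_adj {v w : ZMod n} :
    (circulantGraph (nearZero n)ᶜ).Adj v w ↔ w - v ∉ nearZero n := by
  refine circulantGraph_compl_adj (D := nearZero n) ⟨0, by norm_num, by simp⟩ ?_
  rintro _ ⟨k, hk, rfl⟩
  exact ⟨-k, by simp only [Set.mem_Icc] at hk ⊢; omega, by simp⟩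

theorem ncard_neighborSet_circulantGraph_nearZero_compl (hn : 5 ≤ n) (v : ZMod n) :
    ((circulantGraph (nearZero n)ᶜ).neighborSet v).ncard = n - 5 := by
  have : NeZero n := ⟨by omega⟩
  have hN : (circulantGraph (nearZero n)ᶜ).neighborSet v = ((v + ·) '' nearZero n)ᶜ := by
    ext w
    rw [mem_neighborSet, circulantGraph_nearZero_compl_adj, Set.image_add_left]
    simp [neg_add_eq_sub]
  rw [hN, Set.ncard_compl, Set.ncard_image_of_injective _ (add_right_injective v),
    ncard_nearZero hn, Nat.card_zmod]

theorem disjoint_circulantGraph_one_nearZero_compl (h1 : (1 : ZMod n) ≠ 0) :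
    Disjoint (circulantGraph {1}) (circulantGraph (nearZero n)ᶜ) := by
  refine disjoint_left.mpr fun v w hvw => ?_
  rw [circulantGraph_nearZero_compl_adj, not_not]
  rcases (circulantGraph_singleton_adj h1).mp hvw with h | h <;> rw [h]
  · exact ⟨1, by norm_num, by simp⟩
  · exact ⟨-1, by norm_num, by simp⟩

theorem exists_isCycle_wWeight_eq_five (hn : 5 ≤ n) :
    ∃ (u : ZMod n) (w : (circulantGraph {1} ⊔ circulantGraph (nearZero n)ᶜ).Walk u u),
      w.IsCycle ∧ wWeight (circulantGraph {1}) (circulantGraph (nearZero n)ᶜ) w = 5 := by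
  have h2 : (2 : ZMod n) ≠ 0 := ZMod.ofNat_ne_zero_of_lt 2 (by omega)
  have h1 : (1 : ZMod n) ≠ 0 := fun h => h2 (by linear_combination 2 * h)
  have light {v w : ZMod n} (h : w - v = 1) : (circulantGraph {1}).Adj v w :=
    (circulantGraph_singleton_adj h1).mpr (.inl h)
  obtain rfl | hn6 := hn.eq_or_lt
  · have l₁ : (circulantGraph {1}).Adj (0 : ZMod 5) 1 := light (by decide)
    have l₂ : (circulantGraph {1}).Adj (1 : ZMod 5) 2 := light (by decide)
    have l₃ : (circulantGraph {1}).Adj (2 : ZMod 5) 3 := light (by decide)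
    have l₄ : (circulantGraph {1}).Adj (3 : ZMod 5) 4 := light (by decide)
    have l₅ : (circulantGraph {1}).Adj (4 : ZMod 5) 0 := light (by decide)
    exact ⟨0, _, Walk.isCycle_pentagon (Or.inl l₁) (Or.inl l₂) (Or.inl l₃) (Or.inl l₄)
      (Or.inl l₅) (by decide) (by decide) (by decide) (by decide) (by decide),
      by simp [wWeight, -circulantGraph_adj, l₁, l₂, l₃, l₄, l₅]⟩
  · have l₁ : (circulantGraph {1}).Adj (0 : ZMod n) 1 := light (by ring)
    have l₂ : (circulantGraph {1}).Adj (1 : ZMod n) 2 := light (by ring)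
    have l₃ : (circulantGraph {1}).Adj (2 : ZMod n) 3 := light (by ring)
    have h₄ : (circulantGraph (nearZero n)ᶜ).Adj (3 : ZMod n) 0 := by
      rw [circulantGraph_nearZero_compl_adj]
      rintro ⟨k, hk, hk3⟩
      have := ZMod.intCast_injOn_Icc (n := n) (a := -3) (b := 2) (by omega)
        (Set.Icc_subset_Icc (by norm_num) le_rfl hk) (show (-3 : ℤ) ∈ Set.Icc (-3) 2 by norm_num)
        (by rw [hk3]; push_cast; ring)
      simp only [Set.mem_Icc] at hk
      omega
    have hl₄ : ¬(circulantGraph {1}).Adj (3 : ZMod n) 0 :=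
      fun h => disjoint_left.mp (disjoint_circulantGraph_one_nearZero_compl h1) _ _ h h₄
    exact ⟨0, _, Walk.isCycle_square (Or.inl l₁) (Or.inl l₂) (Or.inl l₃) (Or.inr h₄)
      (fun h => h2 (by linear_combination -h)) (fun h => h2 (by linear_combination -h)),
      by simp [wWeight, -circulantGraph_adj, l₁, l₂, l₃, hl₄]⟩

theorem isWGraph_circulantGraph (hn : 5 ≤ n) :
    IsWGraph (circulantGraph {1}) (circulantGraph (nearZero n)ᶜ) 2 (n - 5) 5 := by
  have h2 : (2 : ZMod n) ≠ 0 := ZMod.ofNat_ne_zero_of_lt 2 (by omega)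
  have h3 : (3 : ZMod n) ≠ 0 := ZMod.ofNat_ne_zero_of_lt 3 (by omega)
  have h4 : (4 : ZMod n) ≠ 0 := ZMod.ofNat_ne_zero_of_lt 4 (by omega)
  have h1 : (1 : ZMod n) ≠ 0 := fun h => h2 (by linear_combination 2 * h)
  refine ⟨disjoint_circulantGraph_one_nearZero_compl h1, ncard_neighborSet_circulantGraph_one h2,
    ncard_neighborSet_circulantGraph_nearZero_compl hn, exists_isCycle_wWeight_eq_five hn,
    forall_five_le_wWeight_iff.mpr ⟨fun a b c hab hbc hac hca => ?_,
      fun a b c d => circulantGraph_one_not_square h4⟩⟩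
  rcases hca with hca | hca
  · exact circulantGraph_one_not_adj_of_adj_adj h3 hab hbc hac hca
  · refine circulantGraph_nearZero_compl_adj.mp hca ?_
    rcases circulantGraph_one_sub_eq_two_or_neg_two h1 hab hbc hac with h | h <;>
      rw [← neg_sub, h]
    · exact ⟨-2, by norm_num, by simp⟩
    · exact ⟨2, by norm_num, by simp⟩

end Construction

/-- For every `b ≥ 0`, the minimum order of a `(2,b)`-regular weighted graph of
girth 5 is exactly `b + 5`. -/
theorem stmt_17 (b : ℕ) :
    IsLeast {n : ℕ | ∃ L H : SimpleGraph (Fin n), IsWGraph L H 2 b 5}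
      (b + 5) := by
  refine ⟨?_, fun n ⟨L, H, h⟩ => by simpa using h.add_five_le_card⟩
  have h := isWGraph_circulantGraph (n := b + 5) (by omega)
  rw [Nat.add_sub_cancel] at h
  -- `ZMod (b + 5)` is definitionally `Fin (b + 5)`
  exact ⟨_, _, h⟩
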